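/- Suppose L ≥ 0 and F admits an MMR expansion with data (Δ, (P^{(j)})_{j≥1}). Then for every j ≥ 1: the coefficient of x^r in P^{(j)} vanishes for all r < −2dj, and the coefficient of x^{−2dj} in P^{(j)} equals the binomial coefficient C(L,j). In particular, for 1 ≤ j ≤ L the minimal x-degree of P^{(j)} is exactly −2dj with leading coefficient C(L,j), while for j > L the minimal x-degree of P^{(j)} is strictly greater than −2dj. -/

import Mathlib

/-- The unit `a + h` of the power series ring `K[[h]]`, for `a ≠ 0`. -/
noncomputable def substUnit (K : Type*) [Field K] (a : K) (ha : a ≠ 0) : (PowerSeries K)ˣ :=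
  Units.mkOfMulEqOne (PowerSeries.C a + PowerSeries.X)
    (PowerSeries.C a + PowerSeries.X)⁻¹
    (PowerSeries.mul_inv_cancel _ (by simp [ha]))

/-- Substitution of the unit `U` (e.g. `1 + h` or `ω + h`) for `q` in a Laurent
polynomial `f ∈ ℤ[q,q⁻¹]`, represented by its finitely supported coefficient function
`f : ℤ →₀ ℤ`; the result `f(U) = ∑_a f_a · U^a` lies in `K[[h]]`. -/
noncomputable def lsubst {K : Type*} [Field K] (U : (PowerSeries K)ˣ) (f : ℤ →₀ ℤ) :
    PowerSeries K :=
  ∑ a ∈ f.support, ((f a : ℤ) : PowerSeries K) * ((U ^ a : (PowerSeries K)ˣ) : PowerSeries K)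

/-- The formal Laurent series `∑_{n ≥ d} c_n xⁿ ∈ K((x))`. -/
noncomputable def seriesOf {K : Type*} [Field K] (d : ℤ) (c : ℤ → K) : LaurentSeries K :=
  HahnSeries.single d 1 * HahnSeries.ofPowerSeries ℤ K (PowerSeries.mk fun i => c (d + i))

/-- A Laurent polynomial over `K`, represented by its finitely supported coefficient
function `g : ℤ →₀ K`, viewed inside the field of formal Laurent series `K((x))`. -/
noncomputable def finsuppToLS {K : Type*} [Zero K] (g : ℤ →₀ K) : LaurentSeries K :=
  { coeff := ⇑g, isPWO_support' := g.finite_support.isPWO }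

/-- A Laurent polynomial with integer coefficients, viewed inside `ℚ((x))`. -/
noncomputable def intLaurentToLS (g : ℤ →₀ ℤ) : LaurentSeries ℚ :=
  finsuppToLS (g.mapRange (fun a : ℤ => (a : ℚ)) (by simp))

/-- `F` (given by its Laurent-polynomial coefficients `f n ∈ ℤ[q,q⁻¹]`, supported in
degrees `n ≥ d`) admits an MMR expansion with data `(Δ, P)`: for every `j ≥ 0`, the
Laurent series `∑_{n ≥ d} ([h^j] f_n(1+h)) xⁿ` equals `P^{(j)}(x)/Δ(x)^{2j+1}` in
`ℚ((x))`, where `P⁰ = 1`. -/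
def HasMMRExpansion (d : ℤ) (f : ℤ → (ℤ →₀ ℤ)) (Δ : ℤ →₀ ℤ) (P : ℕ → (ℤ →₀ ℚ)) : Prop :=
  Δ ≠ 0 ∧ P 0 = Finsupp.single 0 1 ∧
  ∀ j : ℕ,
    seriesOf d (fun r =>
        PowerSeries.coeff j (lsubst (substUnit ℚ 1 one_ne_zero) (f r))) =
      finsuppToLS (P j) / (intLaurentToLS Δ) ^ (2 * j + 1)

/-! Write `Gᵢ = ∑ₙ [hⁱ] f_n(1+h) xⁿ = x^d gᵢ(x)` with `gᵢ` a power series; since `f_d = q^L`,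
`gᵢ(0) = [hⁱ] (1+h)^L = C(L,i)`. The case `j = 0` of the expansion says `Δ = G₀⁻¹`, hence
`P⁽ʲ⁾ = G_j G₀^{-(2j+1)} = x^{-2dj} · g_j g₀^{-(2j+1)}`, and the power series on the right has
constant term `C(L,j)`. -/

open HahnSeries PowerSeries

section LaurentMonomial

variable {R : Type*}

theorem coeff_single_one_mul_ofPowerSeries_of_lt [Semiring R] {e r : ℤ} (a : R⟦X⟧) (h : r < e) :
    (single e (1 : R) * ofPowerSeries ℤ R a).coeff r = 0 := by
  rw [← sub_add_cancel r e, coeff_single_mul_add, one_mul, PowerSeries.coeff_coe,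
    if_pos (by omega)]

theorem coeff_single_one_mul_ofPowerSeries_self [Semiring R] (e : ℤ) (a : R⟦X⟧) :
    (single e (1 : R) * ofPowerSeries ℤ R a).coeff e = constantCoeff a := by
  have h := coeff_single_mul_add (r := (1 : R)) (x := ofPowerSeries ℤ R a) (a := 0) (b := e)
  rw [zero_add] at h
  rw [h, one_mul, PowerSeries.coeff_coe, if_neg (lt_irrefl 0), Int.natAbs_zero,
    coeff_zero_eq_constantCoeff]

theorem single_one_mul_ofPowerSeries_mul [CommSemiring R] (e e' : ℤ) (a b : R⟦X⟧) :
    single e (1 : R) * ofPowerSeries ℤ R a * (single e' 1 * ofPowerSeries ℤ R b) =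
      single (e + e') 1 * ofPowerSeries ℤ R (a * b) := by
  rw [mul_mul_mul_comm, single_mul_single, mul_one, map_mul]

theorem single_one_mul_ofPowerSeries_pow [CommSemiring R] (e : ℤ) (a : R⟦X⟧) (n : ℕ) :
    (single e (1 : R) * ofPowerSeries ℤ R a) ^ n =
      single (n * e) 1 * ofPowerSeries ℤ R (a ^ n) := by
  rw [mul_pow, single_pow, one_pow, map_pow, nsmul_eq_mul]

theorem single_one_mul_ofPowerSeries_inv [Field R] (e : ℤ) {a : R⟦X⟧} (ha : constantCoeff a ≠ 0) :
    (single e (1 : R) * ofPowerSeries ℤ R a)⁻¹ = single (-e) 1 * ofPowerSeries ℤ R a⁻¹ := by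
  refine inv_eq_of_mul_eq_one_right ?_
  rw [single_one_mul_ofPowerSeries_mul, add_neg_cancel, PowerSeries.mul_inv_cancel _ ha,
    map_one (ofPowerSeries ℤ R), single_zero_one, one_mul]

end LaurentMonomial

theorem PowerSeries.coeff_one_add_X_pow {R : Type*} [CommSemiring R] (n k : ℕ) :
    coeff k ((1 + X : R⟦X⟧) ^ n) = n.choose k := by
  rw [← Polynomial.coe_X, ← Polynomial.coe_one, ← Polynomial.coe_add, ← Polynomial.coe_pow,
    Polynomial.coeff_coe, Polynomial.coeff_one_add_X_pow]

theorem lsubst_one_add_X_single_one {K : Type*} [Field K] {L : ℤ} (hL : 0 ≤ L) :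
    lsubst (substUnit K 1 one_ne_zero) (Finsupp.single L 1) = (1 + X) ^ L.toNat := by
  have hU : ((substUnit K 1 one_ne_zero : K⟦X⟧ˣ) : K⟦X⟧) = 1 + X := by
    rw [substUnit, Units.val_mkOfMulEqOne, map_one]
  rw [lsubst, Finsupp.support_single _ one_ne_zero, Finset.sum_singleton,
    Finsupp.single_eq_same, Int.cast_one, one_mul, ← Int.toNat_of_nonneg hL, zpow_natCast,
    Units.val_pow_eq_pow_val, hU, Int.toNat_natCast]

theorem finsuppToLS_single_zero_one {K : Type*} [Semiring K] :
    finsuppToLS (Finsupp.single 0 (1 : K)) = 1 := by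
  ext r
  show Finsupp.single 0 (1 : K) r = _
  by_cases hr : r = 0 <;> simp [hr]

theorem intLaurentToLS_ne_zero {g : ℤ →₀ ℤ} (hg : g ≠ 0) : intLaurentToLS g ≠ 0 := by
  refine fun h => hg (Finsupp.ext fun r => ?_)
  have hr : ((g r : ℤ) : ℚ) = 0 := congrArg (HahnSeries.coeff · r) h
  exact_mod_cast hr

noncomputable def mmrCoeff (f : ℤ → (ℤ →₀ ℤ)) (i : ℕ) (n : ℤ) : ℚ :=
  coeff i (lsubst (substUnit ℚ 1 one_ne_zero) (f n))

theorem HasMMRExpansion.finsuppToLS_eq {d : ℤ} {f : ℤ → (ℤ →₀ ℤ)} {Δ : ℤ →₀ ℤ}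
    {P : ℕ → (ℤ →₀ ℚ)} (h : HasMMRExpansion d f Δ P) (j : ℕ) :
    finsuppToLS (P j) =
      seriesOf d (mmrCoeff f j) * (seriesOf d (mmrCoeff f 0) ^ (2 * j + 1))⁻¹ := by
  obtain ⟨hΔ, hP0, hexp⟩ := h
  have h0 : seriesOf d (mmrCoeff f 0) = _ := hexp 0
  rw [hP0, finsuppToLS_single_zero_one, mul_zero, zero_add, pow_one, one_div] at h0
  have hG0 : seriesOf d (mmrCoeff f 0) ≠ 0 := by
    rw [h0]
    exact inv_ne_zero (intLaurentToLS_ne_zero hΔ)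
  have hj : seriesOf d (mmrCoeff f j) = _ := hexp j
  rw [eq_mul_inv_iff_mul_eq₀ (pow_ne_zero _ hG0), hj, ← inv_inv (intLaurentToLS Δ), ← h0,
    inv_pow, div_inv_eq_mul]

theorem mmr_deg_Pj_nonneg_L_general (d L : ℤ) (hL : 0 ≤ L) (f : ℤ → (ℤ →₀ ℤ))
    (hfd : f d = Finsupp.single L 1)
    (Δ : ℤ →₀ ℤ) (P : ℕ → (ℤ →₀ ℚ)) (hmmr : HasMMRExpansion d f Δ P) :
    ∀ j : ℕ, 1 ≤ j →
      (∀ r : ℤ, r < -(2 * d * j) → P j r = 0) ∧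
      P j (-(2 * d * j)) = (L.toNat.choose j : ℚ) := by
  intro j _
  set g : ℕ → ℚ⟦X⟧ := fun i => mk fun m => mmrCoeff f i (d + m)
  have hg : ∀ i, constantCoeff (g i) = L.toNat.choose i := fun i => by
    rw [← coeff_zero_eq_constantCoeff_apply, coeff_mk, Nat.cast_zero, add_zero, mmrCoeff, hfd,
      lsubst_one_add_X_single_one hL, coeff_one_add_X_pow]
  have hg0 : constantCoeff (g 0 ^ (2 * j + 1)) = 1 := by
    rw [map_pow, hg, Nat.choose_zero_right, Nat.cast_one, one_pow]
  have hP : finsuppToLS (P j) =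
      single (-(2 * d * j)) 1 * ofPowerSeries ℤ ℚ (g j * (g 0 ^ (2 * j + 1))⁻¹) := by
    rw [hmmr.finsuppToLS_eq, seriesOf, seriesOf, single_one_mul_ofPowerSeries_pow,
      single_one_mul_ofPowerSeries_inv _ (hg0 ▸ one_ne_zero), single_one_mul_ofPowerSeries_mul,
      show d + -(((2 * j + 1 : ℕ) : ℤ) * d) = -(2 * d * j) by push_cast; ring]
  refine ⟨fun r hr => ?_, ?_⟩
  · exact (congrArg (HahnSeries.coeff · r) hP).trans
      (coeff_single_one_mul_ofPowerSeries_of_lt _ hr)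
  · refine (congrArg (HahnSeries.coeff · _) hP).trans ?_
    rw [coeff_single_one_mul_ofPowerSeries_self, map_mul, constantCoeff_inv, hg0, hg j,
      inv_one, mul_one]

/-- If `L ≥ 0` and `F` admits an MMR expansion with data `(Δ, P)`,
then for every `j ≥ 1` the coefficient of `x^r` in `P⁽ʲ⁾` vanishes for `r < -2dj` and
the coefficient of `x^{-2dj}` equals the binomial coefficient `C(L, j)`. -/
theorem mmr_deg_Pj_nonneg_L (d L : ℤ) (hL : 0 ≤ L) (f : ℤ → (ℤ →₀ ℤ))
    (hfsupp : ∀ r : ℤ, r < d → f r = 0) (hfd : f d = Finsupp.single L 1)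
    (Δ : ℤ →₀ ℤ) (P : ℕ → (ℤ →₀ ℚ)) (hmmr : HasMMRExpansion d f Δ P) :
    ∀ j : ℕ, 1 ≤ j →
      (∀ r : ℤ, r < -(2 * d * j) → P j r = 0) ∧
      P j (-(2 * d * j)) = (L.toNat.choose j : ℚ) :=
  mmr_deg_Pj_nonneg_L_general d L hL f hfd Δ P hmmr
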